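/- Minimal number of neighbors under Scale merging: for any region O in a 2-normal partition of a bounded domain Ω with respect to Scale region merging with threshold λ, the number of neighbors N(O) satisfies N(O) > 3λ|∂O| / (|Ω|·|O|·ω_f²). -/
import Mathlib


open Finset

/-- Minimal number of neighbors under Scale merging: for a region `O` of area `A`,
perimeter `Pb`, with neighbors indexed by a finite set `𝒩` (areas `a i`,
perimeters `p i`, shared boundary lengths `s i` summing to `Pb`) in a bounded
domain of area `AΩ`, 2-normality with respect to the Scale region merging implies
`N(O) > 3λ|∂O|/(|Ω|·|O|·ω_f²)`. -/
theorem min_number_of_neighbors {ι : Type*} (𝒩 : Finset ι)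
    (A Pb AΩ lam ωsq : ℝ) (a p s : ι → ℝ)
    (hne : 𝒩.Nonempty)
    (hlam : 0 < lam) (hω : 0 < ωsq) (hA : 0 < A) (hAΩ : 0 < AΩ) (hPb : 0 ≤ Pb)
    (ha : ∀ i ∈ 𝒩, 0 < a i) (hp : ∀ i ∈ 𝒩, 0 ≤ p i)
    (hs0 : ∀ i ∈ 𝒩, 0 ≤ s i)
    -- shared boundaries are bounded by each region's perimeter
    (hsP : ∀ i ∈ 𝒩, s i ≤ Pb) (hsp : ∀ i ∈ 𝒩, s i ≤ p i)
    -- shared boundary lengths sum to the perimeter of `O`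
    (hsum : ∑ i ∈ 𝒩, s i = Pb)
    -- all regions lie in the domain Ω
    (hsub : ∀ i ∈ 𝒩, A + a i ≤ AΩ)
    -- 2-normality with respect to the Scale region merging
    (h2n : ∀ i ∈ 𝒩, lam * (Pb / A + p i / a i - (Pb + p i - 2 * s i) / (A + a i)) <
      (A * a i / (A + a i)) * ωsq) :
    3 * lam * Pb / (AΩ * A * ωsq) < (𝒩.card : ℝ) := by
  have key : ∀ i ∈ 𝒩, lam * s i < A * AΩ * ωsq / 3 := by
    intro i hi
    have hai := ha i hi
    have hAa : 0 < A + a i := by linarith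
    have hineq : s i * (A + a i) / (A * a i) ≤
        Pb / A + p i / a i - (Pb + p i - 2 * s i) / (A + a i) := by
      have h1 : Pb / A + p i / a i - (Pb + p i - 2 * s i) / (A + a i)
          - s i * (A + a i) / (A * a i)
          = ((Pb - s i) * (a i)^2 + (p i - s i) * A^2) / (A * a i * (A + a i)) := by
        field_simp
        ring
      have h2 : (0:ℝ) ≤ ((Pb - s i) * (a i)^2 + (p i - s i) * A^2) / (A * a i * (A + a i)) := by
        apply div_nonneg _ (by positivity)
        have := hsP i hi
        have := hsp i hi
        nlinarith [sq_nonneg (a i), sq_nonneg A]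
      linarith
    have h3 : lam * (s i * (A + a i) / (A * a i)) < (A * a i / (A + a i)) * ωsq :=
      lt_of_le_of_lt (mul_le_mul_of_nonneg_left hineq hlam.le) (h2n i hi)
    have h4 : lam * s i < ((A * a i / (A + a i)) * ωsq) * (A * a i / (A + a i)) := by
      have heq : lam * s i = (lam * (s i * (A + a i) / (A * a i))) * (A * a i / (A + a i)) := by
        field_simp
      rw [heq]
      exact mul_lt_mul_of_pos_right h3 (by positivity)
    have h5 : ((A * a i / (A + a i)) * ωsq) * (A * a i / (A + a i))
        = (A * a i / (A + a i))^2 * ωsq := by ring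
    have h6 : (A * a i / (A + a i))^2 ≤ A * a i / 4 := by
      rw [div_pow, div_le_div_iff₀ (by positivity) (by norm_num)]
      nlinarith [sq_nonneg (A - a i), mul_pos hA hai]
    have h7 : A * a i ≤ A * AΩ := by
      have := hsub i hi
      nlinarith
    have : lam * s i < A * AΩ / 4 * ωsq := by
      rw [h5] at h4
      calc lam * s i < (A * a i / (A + a i))^2 * ωsq := h4
        _ ≤ A * AΩ / 4 * ωsq := by
            apply mul_le_mul_of_nonneg_right _ hω.le
            calc (A * a i / (A + a i))^2 ≤ A * a i / 4 := h6
              _ ≤ A * AΩ / 4 := by linarith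
    have hpos : 0 < A * AΩ * ωsq := by positivity
    nlinarith
  have hsumlt : ∑ i ∈ 𝒩, lam * s i < ∑ i ∈ 𝒩, A * AΩ * ωsq / 3 :=
    Finset.sum_lt_sum_of_nonempty hne key
  rw [← Finset.mul_sum, hsum, Finset.sum_const, nsmul_eq_mul] at hsumlt
  rw [div_lt_iff₀ (by positivity)]
  nlinarith
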